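/- arXiv:2603.07603 — 6 statements merged into one kernel-verified Lean document; each statement's English description precedes it below -/
import Mathlib

section
/- There exist a split digraph D=(V_1,V_2;A) and four distinct vertices s_1,t_1,s_2,t_2 of D such that κ_{D−{s_2,t_2}}(s_1,t_1)=3 and κ_{D−{s_1,t_1}}(s_2,t_2)=3, yet the tuple (D,s_1,t_1,s_2,t_2) is not good. -/
/-- A digraph (given by its arc relation `A`) is loopless. -/
def IsLoopless {V : Type*} (A : V → V → Prop) : Prop :=
  ∀ v, ¬ A v v

/-- `l` is a directed path in the digraph with arc relation `A`, recorded as the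
(nonempty, repetition-free) list of its vertices, consecutive ones joined by arcs. -/
def IsDipath {V : Type*} (A : V → V → Prop) (l : List V) : Prop :=
  l ≠ [] ∧ l.Nodup ∧ l.Chain' A

/-- `l` is a directed `(s,t)`-path. -/
def IsDipathFrom {V : Type*} (A : V → V → Prop) (s t : V) (l : List V) : Prop :=
  IsDipath A l ∧ l.head? = some s ∧ l.getLast? = some t

/-- The digraph `A`, with the vertices of `F` deleted, contains `k` internally
disjoint `(s,t)`-paths. -/
def HasIDPaths {V : Type*} (A : V → V → Prop) (F : Set V) (s t : V) (k : ℕ) : Prop :=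
  ∃ P : Fin k → List V,
    (∀ i, IsDipathFrom A s t (P i) ∧ ∀ v ∈ P i, v ∉ F) ∧
    (∀ i j, i ≠ j → ∀ v, v ∈ P i → v ∈ P j → v = s ∨ v = t)

/-- The digraph `A` is `k`-linked. -/
def IsKLinked {V : Type*} (A : V → V → Prop) (k : ℕ) : Prop :=
  ∀ s t : Fin k → V,
    Function.Injective (Sum.elim s t : Fin k ⊕ Fin k → V) →
    ∃ P : Fin k → List V,
      (∀ i, IsDipathFrom A (s i) (t i) (P i)) ∧
      (∀ i j, i ≠ j → ∀ v, v ∈ P i → v ∉ P j)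

/-- The digraph `A` is `k`-strong. -/
def IsKStrong {V : Type*} [Fintype V] (A : V → V → Prop) (k : ℕ) : Prop :=
  k + 1 ≤ Fintype.card V ∧
  ∀ F : Finset V, F.card ≤ k - 1 →
    ∀ x y : V, x ∉ F → y ∉ F → x ≠ y →
      ∃ l : List V, IsDipathFrom A x y l ∧ ∀ v ∈ l, v ∉ F

/-- `(A, V1, V2)` is a split digraph: the vertex set is the disjoint union of the
nonempty sets `V1` and `V2`, there is no arc between two vertices of `V1`, and the
subdigraph induced by `V2` is semicomplete. -/
def IsSplitDigraph {V : Type*} (A : V → V → Prop) (V1 V2 : Set V) : Prop :=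
  V1.Nonempty ∧ V2.Nonempty ∧ Disjoint V1 V2 ∧ V1 ∪ V2 = Set.univ ∧
  (∀ u ∈ V1, ∀ v ∈ V1, ¬ A u v) ∧
  (∀ u ∈ V2, ∀ v ∈ V2, u ≠ v → A u v ∨ A v u)

/-- The tuple `(A, s1, t1, s2, t2)` is good: there are vertex-disjoint `(s1,t1)`-
and `(s2,t2)`-paths. -/
def IsGood {V : Type*} (A : V → V → Prop) (s1 t1 s2 t2 : V) : Prop :=
  ∃ P1 P2 : List V, IsDipathFrom A s1 t1 P1 ∧ IsDipathFrom A s2 t2 P2 ∧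
    ∀ v ∈ P1, v ∉ P2

/-!
The counterexample has 13 vertices. The vertices `2 → 3 → 7 → 2` form a directed triangle, and
each of its three arcs `a → b` has two parallel detours `a → u → b` and `a → w → b`, where `u` is
an out-neighbour of `s₁ = 9` and an in-neighbour of `t₂ = 12`, while `w` is an out-neighbour of
`s₂ = 11` and an in-neighbour of `t₁ = 10`. So the `(s₁,t₁)`-path enters the triangle through a
vertex `u` and leaves it through a vertex `w`, the `(s₂,t₂)`-path the other way round, and both
move forward around the triangle in between; two disjoint such paths do not fit around it. The
value `κ = 3` is attained by three paths, each through one vertex of the triangle, and is bounded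
by the out-degree three of `s₁` in `D − {s₂,t₂}` and of `s₂` in `D − {s₁,t₁}`.

Non-linkedness is verified exhaustively: for every set `M` of non-terminal vertices, either `t₁`
is unreachable from `s₁` through `M`, or `t₂` is unreachable from `s₂` through the complement of
`M`. Vertex sets are encoded as bitmasks so that the kernel checks the `2⁹` cases quickly.
-/

section Paths

variable {V : Type*} {A : V → V → Prop}

theorem IsDipathFrom.exists_eq_cons_cons {s t : V} {l : List V} (h : IsDipathFrom A s t l)
    (hst : s ≠ t) : ∃ v l', l = s :: v :: l' ∧ A s v := by
  obtain ⟨⟨hne, -, hchain⟩, hhead, hlast⟩ := h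
  match l, hne, hhead, hlast, hchain with
  | [a], _, hhead, hlast, _ =>
    simp only [List.head?_cons, List.getLast?_singleton, Option.some.injEq] at hhead hlast
    exact absurd (hhead ▸ hlast) hst
  | a :: v :: l', _, hhead, _, hchain =>
    obtain rfl : a = s := Option.some.inj hhead
    exact ⟨v, l', rfl, (List.isChain_cons_cons.mp hchain).1⟩

/-- Menger's easy direction: internally disjoint `(s,t)`-paths leave `s` along distinct arcs. -/
theorem not_hasIDPaths_of_forall_arc_mem {F : Set V} {s t : V} {k : ℕ} (N : Finset V)
    (hst : s ≠ t) (ht : t ∉ N) (hk : N.card < k) (hN : ∀ v, A s v → v ∉ F → v ∈ N) :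
    ¬ HasIDPaths A F s t k := by
  rintro ⟨P, hP, hdisj⟩
  choose v l' hPv hAv using fun i => (hP i).1.exists_eq_cons_cons hst
  have hv_mem : ∀ i, v i ∈ P i := fun i => by simp [hPv i]
  have hv_ne : ∀ i, v i ≠ s := fun i h => by
    have hnodup := (hP i).1.1.2.1
    rw [hPv i, h] at hnodup
    simp at hnodup
  have hvN : ∀ i, v i ∈ N := fun i => hN _ (hAv i) ((hP i).2 _ (hv_mem i))
  have hinj : Set.InjOn v (Finset.univ : Finset (Fin k)) := by
    intro i _ j _ hij
    by_contra hne
    rcases hdisj i j hne (v i) (hv_mem i) (hij ▸ hv_mem j) with h | h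
    · exact hv_ne i h
    · exact ht (h ▸ hvN i)
  have := Finset.card_le_card_of_injOn v (fun i _ => hvN i) hinj
  simp only [Finset.card_univ, Fintype.card_fin] at this
  omega

end Paths

section Bitmasks

variable {n : ℕ}

def BitsLE (a b : ℕ) : Prop := ∀ i, a.testBit i → b.testBit i

theorem BitsLE.trans {a b c : ℕ} (hab : BitsLE a b) (hbc : BitsLE b c) : BitsLE a c :=
  fun i h => hbc i (hab i h)

def vertexMask (l : List (Fin n)) : ℕ := l.foldr (fun v m => 2 ^ v.val ||| m) 0

theorem testBit_vertexMask {l : List (Fin n)} {i : ℕ} :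
    (vertexMask l).testBit i ↔ ∃ v ∈ l, v.val = i := by
  induction l with
  | nil => simp [vertexMask]
  | cons w l ih =>
    simp only [vertexMask, List.foldr_cons, Nat.testBit_or, Nat.testBit_two_pow,
      Bool.or_eq_true, decide_eq_true_eq, List.mem_cons, exists_eq_or_imp] at ih ⊢
    rw [ih]

variable (N : Fin n → List (Fin n))

/-- One step of the search in the digraph with out-neighbour lists `N`: add to the set `r` the
out-neighbours of its vertices that lie in `T`. -/
def growMask (T r : ℕ) : ℕ :=
  r ||| (vertexMask (((List.finRange n).filter fun u : Fin n => r.testBit u.val).flatMap N) &&& T)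

/-- The vertices reachable from `s` by a walk whose vertices other than `s` all lie in `T`. -/
def reachMask (T : ℕ) (s : Fin n) : ℕ := (growMask N T)^[n] (2 ^ s.val)

variable {N}

theorem testBit_growMask {T r i : ℕ} :
    (growMask N T r).testBit i ↔
      r.testBit i ∨ (∃ u : Fin n, r.testBit u ∧ ∃ v ∈ N u, v.val = i) ∧ T.testBit i := by
  simp only [growMask, Nat.testBit_or, Nat.testBit_and, Bool.or_eq_true, Bool.and_eq_true,
    testBit_vertexMask, List.mem_flatMap, List.mem_filter, List.mem_finRange, true_and]
  constructor
  · rintro (h | ⟨⟨v, ⟨u, hu, hv⟩, rfl⟩, hT⟩)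
    exacts [.inl h, .inr ⟨⟨u, hu, v, hv, rfl⟩, hT⟩]
  · rintro (h | ⟨⟨u, hu, v, hv, rfl⟩, hT⟩)
    exacts [.inl h, .inr ⟨⟨v, ⟨u, hu, hv⟩, rfl⟩, hT⟩]

theorem bitsLE_growMask (T r : ℕ) : BitsLE r (growMask N T r) :=
  fun _ h => testBit_growMask.mpr (.inl h)

theorem growMask_mono {T r r' : ℕ} (h : BitsLE r r') :
    BitsLE (growMask N T r) (growMask N T r') := by
  intro i hi
  rcases testBit_growMask.mp hi with hr | ⟨⟨u, hu, hv⟩, hT⟩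
  exacts [testBit_growMask.mpr (.inl (h i hr)), testBit_growMask.mpr (.inr ⟨⟨u, h u hu, hv⟩, hT⟩)]

theorem bitsLE_iterate_growMask (T r k : ℕ) : BitsLE r ((growMask N T)^[k] r) := by
  induction k with
  | zero => exact fun _ h => h
  | succ k ih => exact ih.trans (by rw [Function.iterate_succ_apply']; exact bitsLE_growMask T _)

theorem iterate_growMask_mono {T r r' : ℕ} (k : ℕ) (h : BitsLE r r') :
    BitsLE ((growMask N T)^[k] r) ((growMask N T)^[k] r') := by
  induction k generalizing r r' with
  | zero => exact h
  | succ k ih => exact ih (growMask_mono h)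

theorem testBit_iterate_growMask_of_isChain {T : ℕ} {t : Fin n} :
    ∀ (s : Fin n) (l : List (Fin n)) (k : ℕ), (s :: l).IsChain (fun u v => v ∈ N u) →
      (s :: l).getLast? = some t → (∀ v ∈ l, T.testBit v.val) → l.length ≤ k →
      ((growMask N T)^[k] (2 ^ s.val)).testBit t.val
  | s, [], k, _, hlast, _, _ => by
    obtain rfl : s = t := by simpa using hlast
    exact bitsLE_iterate_growMask T _ k _ (Nat.testBit_two_pow_self)
  | s, b :: l, k + 1, hchain, hlast, hT, hlen => by
    rw [List.isChain_cons_cons] at hchain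
    rw [List.getLast?_cons_cons] at hlast
    have hb : BitsLE (2 ^ b.val) (growMask N T (2 ^ s.val)) := by
      intro i hi
      obtain rfl : b.val = i := by simpa [Nat.testBit_two_pow] using hi
      exact testBit_growMask.mpr
        (.inr ⟨⟨s, Nat.testBit_two_pow_self, b, hchain.1, rfl⟩, hT b List.mem_cons_self⟩)
    rw [Function.iterate_succ_apply]
    exact iterate_growMask_mono k hb _ <| testBit_iterate_growMask_of_isChain b l k hchain.2
      hlast (fun v hv => hT v (List.mem_cons_of_mem b hv)) (Nat.le_of_succ_le_succ hlen)

theorem testBit_reachMask_of_isDipathFrom {T : ℕ} {s t : Fin n} {l : List (Fin n)}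
    (hl : IsDipathFrom (fun u v => v ∈ N u) s t l) (hT : ∀ v ∈ l, v ≠ s → T.testBit v.val) :
    (reachMask N T s).testBit t.val := by
  obtain ⟨⟨hne, hnodup, hchain⟩, hhead, hlast⟩ := hl
  obtain ⟨l', rfl⟩ : ∃ l', l = s :: l' := by
    cases l with
    | nil => exact absurd rfl hne
    | cons a l' => exact ⟨l', by simpa using hhead⟩
  have hs : s ∉ l' := (List.nodup_cons.mp hnodup).1
  have hlen : l'.length + 1 ≤ n := by simpa using hnodup.length_le_card
  exact testBit_iterate_growMask_of_isChain s l' n hchain hlast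
    (fun v hv => hT v (List.mem_cons_of_mem s hv) (ne_of_mem_of_not_mem hv hs)) (by omega)

/-- If the non-terminal vertices are those below `k`, a linkage yields a bitmask `m < 2 ^ k` (the
non-terminal vertices of the first path) that separates the two reachability problems. -/
theorem not_isGood_of_forall_mask {s₁ t₁ s₂ t₂ : Fin n} (k : ℕ)
    (hinner : ∀ v : Fin n, v ≠ s₁ → v ≠ t₁ → v ≠ s₂ → v ≠ t₂ → v.val < k)
    (hmask : ∀ m < 2 ^ k, (reachMask N (m ||| 2 ^ t₁.val) s₁).testBit t₁.val = false ∨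
      (reachMask N ((2 ^ k - 1 ^^^ m) ||| 2 ^ t₂.val) s₂).testBit t₂.val = false) :
    ¬ IsGood (fun u v => v ∈ N u) s₁ t₁ s₂ t₂ := by
  rintro ⟨P₁, P₂, hP₁, hP₂, hdisj⟩
  have hs₁ : s₁ ∈ P₁ := List.mem_of_mem_head? hP₁.2.1
  have ht₁ : t₁ ∈ P₁ := List.mem_of_mem_getLast? hP₁.2.2
  have hs₂ : s₂ ∈ P₂ := List.mem_of_mem_head? hP₂.2.1
  have ht₂ : t₂ ∈ P₂ := List.mem_of_mem_getLast? hP₂.2.2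
  set m := vertexMask P₁ &&& (2 ^ k - 1)
  have hm : m < 2 ^ k := Nat.lt_of_le_of_lt Nat.and_le_right (Nat.sub_lt (by positivity) one_pos)
  have hmask_iff {v : Fin n} (hv : v.val < k) : m.testBit v.val ↔ v ∈ P₁ := by
    simp only [m, Nat.testBit_and, Nat.testBit_two_pow_sub_one, hv, decide_true, Bool.and_true,
      testBit_vertexMask, Fin.val_inj, exists_eq_right]
  have reach₁ : (reachMask N (m ||| 2 ^ t₁.val) s₁).testBit t₁.val := by
    refine testBit_reachMask_of_isDipathFrom hP₁ fun v hv hvs => ?_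
    by_cases hvt : v = t₁
    · simp [hvt, Nat.testBit_or]
    · have hv' := hinner v hvs hvt (fun h => hdisj v hv (h ▸ hs₂)) (fun h => hdisj v hv (h ▸ ht₂))
      simp [Nat.testBit_or, (hmask_iff hv').mpr hv]
  have reach₂ : (reachMask N ((2 ^ k - 1 ^^^ m) ||| 2 ^ t₂.val) s₂).testBit t₂.val := by
    refine testBit_reachMask_of_isDipathFrom hP₂ fun v hv hvs => ?_
    by_cases hvt : v = t₂
    · simp [hvt, Nat.testBit_or]
    · have hvP₁ : v ∉ P₁ := fun h => hdisj v h hv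
      have hv' := hinner v (fun h => hvP₁ (h ▸ hs₁)) (fun h => hvP₁ (h ▸ ht₁)) hvs hvt
      have hmv : m.testBit v.val = false :=
        Bool.eq_false_iff.mpr fun h => hvP₁ ((hmask_iff hv').mp h)
      simp [Nat.testBit_or, Nat.testBit_xor, Nat.testBit_two_pow_sub_one, hv', hmv]
  rcases hmask m hm with h | h
  · exact absurd reach₁ (by simp [h])
  · exact absurd reach₂ (by simp [h])

end Bitmasks

namespace Counterexample

def outNbrs : Fin 13 → List (Fin 13) :=
  ![[3, 12], [2, 10], [0, 3, 5, 9, 11], [4, 6, 7, 9, 11], [7, 12], [3, 10], [7, 10],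
    [1, 2, 8, 9, 11], [2, 12], [0, 4, 8], [2, 3, 7, 9, 11, 12], [1, 5, 6, 9], [2, 3, 7, 9, 11]]

def V₁ : Finset (Fin 13) := {0, 1, 4, 5, 6, 8}

theorem isLoopless : IsLoopless fun u v => v ∈ outNbrs u := by
  unfold IsLoopless; decide

theorem isSplitDigraph : IsSplitDigraph (fun u v => v ∈ outNbrs u) V₁ (↑V₁)ᶜ := by
  refine ⟨⟨0, by decide⟩, ⟨2, by decide⟩, disjoint_compl_right, Set.union_compl_self _, ?_, ?_⟩ <;>
  · simp only [Finset.mem_coe, Set.mem_compl_iff]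
    decide

theorem hasIDPaths₁ : HasIDPaths (fun u v => v ∈ outNbrs u) {11, 12} 9 10 3 := by
  refine ⟨![[9, 0, 3, 6, 10], [9, 4, 7, 1, 10], [9, 8, 2, 5, 10]], ?_, by decide⟩
  simp only [IsDipathFrom, IsDipath, List.Chain', Set.mem_insert_iff, Set.mem_singleton_iff]
  decide

theorem hasIDPaths₂ : HasIDPaths (fun u v => v ∈ outNbrs u) {9, 10} 11 12 3 := by
  refine ⟨![[11, 1, 2, 0, 12], [11, 5, 3, 4, 12], [11, 6, 7, 8, 12]], ?_, by decide⟩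
  simp only [IsDipathFrom, IsDipath, List.Chain', Set.mem_insert_iff, Set.mem_singleton_iff]
  decide

theorem not_hasIDPaths₁ : ¬ HasIDPaths (fun u v => v ∈ outNbrs u) {11, 12} 9 10 4 :=
  not_hasIDPaths_of_forall_arc_mem {0, 4, 8} (by decide) (by decide) (by decide) (by
    simp only [Set.mem_insert_iff, Set.mem_singleton_iff]; decide)

theorem not_hasIDPaths₂ : ¬ HasIDPaths (fun u v => v ∈ outNbrs u) {9, 10} 11 12 4 :=
  not_hasIDPaths_of_forall_arc_mem {1, 5, 6} (by decide) (by decide) (by decide) (by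
    simp only [Set.mem_insert_iff, Set.mem_singleton_iff]; decide)

theorem not_isGood : ¬ IsGood (fun u v => v ∈ outNbrs u) 9 10 11 12 := by
  refine not_isGood_of_forall_mask 9 (by decide) ?_
  have hcheck : (List.range (2 ^ 9)).all (fun m =>
      !(reachMask outNbrs (m ||| 2 ^ 10) 9).testBit 10 ||
      !(reachMask outNbrs ((2 ^ 9 - 1 ^^^ m) ||| 2 ^ 12) 11).testBit 12) = true := by
    decide +kernel
  intro m hm
  simpa [Bool.or_eq_true] using List.all_eq_true.mp hcheck m (List.mem_range.mpr hm)

end Counterexample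

open Counterexample in
/-- There is a split digraph D with distinct vertices s1,t1,s2,t2 such that
κ_{D−{s2,t2}}(s1,t1) = 3 and κ_{D−{s1,t1}}(s2,t2) = 3, but the tuple
(D,s1,t1,s2,t2) is not good. -/
theorem stmt_5 :
    ∃ (n : ℕ) (A : Fin n → Fin n → Prop) (V1 V2 : Set (Fin n))
      (s1 t1 s2 t2 : Fin n),
      IsLoopless A ∧ IsSplitDigraph A V1 V2 ∧
      ([s1, t1, s2, t2] : List (Fin n)).Nodup ∧
      HasIDPaths A {s2, t2} s1 t1 3 ∧ ¬ HasIDPaths A {s2, t2} s1 t1 4 ∧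
      HasIDPaths A {s1, t1} s2 t2 3 ∧ ¬ HasIDPaths A {s1, t1} s2 t2 4 ∧
      ¬ IsGood A s1 t1 s2 t2 :=
  ⟨13, fun u v => v ∈ outNbrs u, V₁, (↑V₁)ᶜ, 9, 10, 11, 12, isLoopless, isSplitDigraph,
    by decide, hasIDPaths₁, not_hasIDPaths₁, hasIDPaths₂, not_hasIDPaths₂, not_isGood⟩
end

section
/- Let D be the explicit digraph described in the context. Then for each i∈{1,2,3}, the set {z_i, y_{i+1}, x_{i+2}} (subscripts taken modulo 3, with representatives in {1,2,3}) is an (s_1,t_1)-separator in D−{s_2,t_2}. -/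
/-!
Let `S = {s₂, t₂, z_i, y_{i+1}, x_{i+2}}`. In `D − S` the only arcs leaving
`C = {s₁, x_i, x_{i+1}, y_i}` end in `C` again: `s₁` reaches only `x_i, x_{i+1}`,
`x_i` only `y_i`, `x_{i+1}` nothing, and `y_i` only `s₁` and `x_{i+1}`
(its arc to `x_{i+1}` is the arc `y_{j+1} x_{j+2}` for `j = i - 1`).
So every `s₁`-path avoiding `S` stays in `C`, which misses `t₁`.
-/

def IsClosedAvoiding {V : Type*} (A : V → V → Prop) (S C : Set V) : Prop :=
  ∀ u ∈ C, ∀ v, A u v → v ∉ S → v ∈ C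

theorem IsClosedAvoiding.not_exists_isDipathFrom {V : Type*} {A : V → V → Prop} {S C : Set V}
    {s t : V} (hC : IsClosedAvoiding A S C) (hs : s ∈ C) (ht : t ∉ C) :
    ¬ ∃ l, IsDipathFrom A s t l ∧ ∀ v ∈ l, v ∉ S := by
  rintro ⟨l, ⟨⟨-, -, hchain⟩, hhead, hlast⟩, havoid⟩
  have hchainS : l.IsChain fun u v => A u v ∧ v ∉ S :=
    hchain.imp_of_mem_imp fun _ v _ hv huv => ⟨huv, havoid v hv⟩
  refine ht (hchainS.induction (· ∈ C) l (fun u v huv hu => hC u hu v huv.1 huv.2)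
    (fun hl => ?_) t (List.mem_of_getLast? hlast))
  rwa [Option.some_inj.mp ((List.head?_eq_some_head hl).symm.trans hhead)]

section

variable {V : Type*} {A : V → V → Prop} {s1 t1 s2 t2 : V} {x y z : Fin 3 → V}
    (hnodup : ([s1, t1, s2, t2, x 0, x 1, x 2, y 0, y 1, y 2,
                z 0, z 1, z 2] : List V).Nodup)
    (harc : ∀ u v : V, A u v ↔ (
      (∃ i : Fin 3, u = y i ∧ v = y (i + 1)) ∨
      (u = s1 ∧ v = s2) ∨ (u = t1 ∧ v = s2) ∨ (u = s1 ∧ v = t2) ∨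
      (u = t1 ∧ v = t2) ∨ (u = t1 ∧ v = s1) ∨ (u = t2 ∧ v = s2) ∨
      (u = s1 ∧ ∃ i : Fin 3, v = x i) ∨ ((∃ i : Fin 3, u = z i) ∧ v = t1) ∨
      (u = t1 ∧ ∃ i : Fin 3, v = y i) ∨ ((∃ i : Fin 3, u = y i) ∧ v = s1) ∨
      (∃ i : Fin 3, u = x i ∧ v = y i) ∨ (∃ i : Fin 3, u = y i ∧ v = z i) ∨
      (((∃ i : Fin 3, u = x i) ∨ (∃ i : Fin 3, u = y i)) ∧ v = s2) ∨
      (u = s2 ∧ ∃ i : Fin 3, v = z i) ∨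
      (u = t2 ∧ ((∃ i : Fin 3, v = y i) ∨ (∃ i : Fin 3, v = z i))) ∨
      ((∃ i : Fin 3, u = x i) ∧ v = t2) ∨
      (∃ i : Fin 3, u = z i ∧ v = y (i + 1)) ∨
      (∃ i : Fin 3, u = y (i + 1) ∧ v = x (i + 2))))

include hnodup

theorem s1_ne_t1_and_forall_ne : s1 ≠ t1 ∧ ∀ j,
    s1 ≠ x j ∧ s1 ≠ y j ∧ s1 ≠ z j ∧ t1 ≠ x j ∧ t1 ≠ y j ∧ t1 ≠ z j := by
  simp only [List.nodup_cons, List.mem_cons, List.not_mem_nil, not_or] at hnodup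
  simp only [Fin.forall_fin_succ]
  grind

include harc

theorem eq_of_adj_s1 {v : V} (h : A s1 v) : v = s2 ∨ v = t2 ∨ ∃ j, v = x j := by
  rw [harc] at h
  simp only [List.nodup_cons, List.mem_cons, List.not_mem_nil, not_or] at hnodup
  simp only [Fin.exists_fin_succ] at h
  grind

theorem eq_of_adj_x {i : Fin 3} {v : V} (h : A (x i) v) : v = y i ∨ v = s2 ∨ v = t2 := by
  rw [harc] at h
  simp only [List.nodup_cons, List.mem_cons, List.not_mem_nil, not_or] at hnodup
  fin_cases i <;> simp only [Fin.exists_fin_succ] at h <;> grind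

theorem eq_of_adj_y {i : Fin 3} {v : V} (h : A (y i) v) :
    v = y (i + 1) ∨ v = s1 ∨ v = z i ∨ v = s2 ∨ v = x (i + 1) := by
  rw [harc] at h
  simp only [List.nodup_cons, List.mem_cons, List.not_mem_nil, not_or] at hnodup
  fin_cases i <;> simp only [Fin.exists_fin_succ] at h <;> grind

theorem isClosedAvoiding_s1_x_x_y (i : Fin 3) :
    IsClosedAvoiding A {s2, t2, z i, y (i + 1), x (i + 2)} {s1, x i, x (i + 1), y i} := by
  intro u hu v huv hv
  simp only [Set.mem_insert_iff, Set.mem_singleton_iff, not_or] at hu hv ⊢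
  rcases hu with rfl | rfl | rfl | rfl
  · obtain h | h | ⟨j, rfl⟩ := eq_of_adj_s1 hnodup harc huv
    · exact (hv.1 h).elim
    · exact (hv.2.1 h).elim
    · have hj : j ≠ i + 2 := fun h => hv.2.2.2.2 (congrArg x h)
      have : j = i ∨ j = i + 1 :=
        (by decide : ∀ i j : Fin 3, j ≠ i + 2 → j = i ∨ j = i + 1) i j hj
      grind
  · grind [eq_of_adj_x hnodup harc huv]
  · grind [eq_of_adj_x hnodup harc huv]
  · grind [eq_of_adj_y hnodup harc huv]

end

theorem stmt_6_general {V : Type*}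
    (A : V → V → Prop) (s1 t1 s2 t2 : V) (x y z : Fin 3 → V)
    (hnodup : ([s1, t1, s2, t2, x 0, x 1, x 2, y 0, y 1, y 2,
                z 0, z 1, z 2] : List V).Nodup)
    (harc : ∀ u v : V, A u v ↔ (
      (∃ i : Fin 3, u = y i ∧ v = y (i + 1)) ∨
      (u = s1 ∧ v = s2) ∨ (u = t1 ∧ v = s2) ∨ (u = s1 ∧ v = t2) ∨
      (u = t1 ∧ v = t2) ∨ (u = t1 ∧ v = s1) ∨ (u = t2 ∧ v = s2) ∨
      (u = s1 ∧ ∃ i : Fin 3, v = x i) ∨ ((∃ i : Fin 3, u = z i) ∧ v = t1) ∨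
      (u = t1 ∧ ∃ i : Fin 3, v = y i) ∨ ((∃ i : Fin 3, u = y i) ∧ v = s1) ∨
      (∃ i : Fin 3, u = x i ∧ v = y i) ∨ (∃ i : Fin 3, u = y i ∧ v = z i) ∨
      (((∃ i : Fin 3, u = x i) ∨ (∃ i : Fin 3, u = y i)) ∧ v = s2) ∨
      (u = s2 ∧ ∃ i : Fin 3, v = z i) ∨
      (u = t2 ∧ ((∃ i : Fin 3, v = y i) ∨ (∃ i : Fin 3, v = z i))) ∨
      ((∃ i : Fin 3, u = x i) ∧ v = t2) ∨
      (∃ i : Fin 3, u = z i ∧ v = y (i + 1)) ∨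
      (∃ i : Fin 3, u = y (i + 1) ∧ v = x (i + 2)))) :
    ∀ i : Fin 3,
      s1 ∉ ({z i, y (i + 1), x (i + 2)} : Set V) ∧
      t1 ∉ ({z i, y (i + 1), x (i + 2)} : Set V) ∧
      ¬ ∃ l : List V, IsDipathFrom A s1 t1 l ∧
          ∀ v ∈ l, v ∉ ({s2, t2, z i, y (i + 1), x (i + 2)} : Set V) := by
  intro i
  obtain ⟨hs1t1, hne⟩ := s1_ne_t1_and_forall_ne hnodup
  refine ⟨by simp [hne], by simp [hne],
    (isClosedAvoiding_s1_x_x_y hnodup harc i).not_exists_isDipathFrom (by simp) ?_⟩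
  simp [hne, hs1t1.symm]

/-- In the explicit 13-vertex split digraph of Proposition 2 (vertices
s1,t1,s2,t2 together with x 0,x 1,x 2, y 0,y 1,y 2, z 0,z 1,z 2, arcs exactly
as listed), for each i the set {z i, y (i+1), x (i+2)} (indices mod 3) is an
(s1,t1)-separator in D − {s2,t2}. -/
theorem stmt_6 {V : Type*} [Fintype V] [DecidableEq V]
    (A : V → V → Prop) (s1 t1 s2 t2 : V) (x y z : Fin 3 → V)
    (hnodup : ([s1, t1, s2, t2, x 0, x 1, x 2, y 0, y 1, y 2,
                z 0, z 1, z 2] : List V).Nodup)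
    (hvert : ∀ v : V, v ∈ ([s1, t1, s2, t2, x 0, x 1, x 2, y 0, y 1, y 2,
                z 0, z 1, z 2] : List V))
    (harc : ∀ u v : V, A u v ↔ (
      (∃ i : Fin 3, u = y i ∧ v = y (i + 1)) ∨
      (u = s1 ∧ v = s2) ∨ (u = t1 ∧ v = s2) ∨ (u = s1 ∧ v = t2) ∨
      (u = t1 ∧ v = t2) ∨ (u = t1 ∧ v = s1) ∨ (u = t2 ∧ v = s2) ∨
      (u = s1 ∧ ∃ i : Fin 3, v = x i) ∨ ((∃ i : Fin 3, u = z i) ∧ v = t1) ∨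
      (u = t1 ∧ ∃ i : Fin 3, v = y i) ∨ ((∃ i : Fin 3, u = y i) ∧ v = s1) ∨
      (∃ i : Fin 3, u = x i ∧ v = y i) ∨ (∃ i : Fin 3, u = y i ∧ v = z i) ∨
      (((∃ i : Fin 3, u = x i) ∨ (∃ i : Fin 3, u = y i)) ∧ v = s2) ∨
      (u = s2 ∧ ∃ i : Fin 3, v = z i) ∨
      (u = t2 ∧ ((∃ i : Fin 3, v = y i) ∨ (∃ i : Fin 3, v = z i))) ∨
      ((∃ i : Fin 3, u = x i) ∧ v = t2) ∨
      (∃ i : Fin 3, u = z i ∧ v = y (i + 1)) ∨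
      (∃ i : Fin 3, u = y (i + 1) ∧ v = x (i + 2)))) :
    ∀ i : Fin 3,
      s1 ∉ ({z i, y (i + 1), x (i + 2)} : Set V) ∧
      t1 ∉ ({z i, y (i + 1), x (i + 2)} : Set V) ∧
      ¬ ∃ l : List V, IsDipathFrom A s1 t1 l ∧
          ∀ v ∈ l, v ∉ ({s2, t2, z i, y (i + 1), x (i + 2)} : Set V) :=
  stmt_6_general A s1 t1 s2 t2 x y z hnodup harc
end

section
/- Let D be the explicit digraph described in the context. Then for each i∈{1,2,3}, the set {z_i, y_{i+1}, y_{i+2}} (subscripts taken modulo 3, with representatives in {1,2,3}) is an (s_1,t_1)-separator in D−{s_2,t_2}. -/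
theorem IsDipathFrom.mem_of_forall_arc {V : Type*} {A : V → V → Prop} {R S : Set V}
    {s t : V} {l : List V} (hl : IsDipathFrom A s t l) (hlS : ∀ v ∈ l, v ∉ S) (hs : s ∈ R)
    (hR : ∀ u v, u ∈ R → A u v → v ∉ S → v ∈ R) : t ∈ R := by
  obtain ⟨⟨-, -, hchain⟩, hhead, hlast⟩ := hl
  have hchainS : l.IsChain (fun u v => A u v ∧ v ∉ S) :=
    hchain.imp_of_mem_imp fun _ v _ hv huv => ⟨huv, hlS v hv⟩
  refine hchainS.induction (· ∈ R) l (fun u v huv hu => hR u v hu huv.1 huv.2) ?_ t ?_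
  · intro hne
    rwa [(List.head_eq_iff_head?_eq_some hne).mpr hhead]
  · exact List.mem_of_getLast? hlast

section ExampleDigraph

variable {V : Type*}

/-- The arc relation of `D`, with the paper's indices `1, 2, 3` shifted to `0, 1, 2 : Fin 3`. -/
def ExampleArc (s1 t1 s2 t2 : V) (x y z : Fin 3 → V) (u v : V) : Prop :=
  (∃ i : Fin 3, u = y i ∧ v = y (i + 1)) ∨
  (u = s1 ∧ v = s2) ∨ (u = t1 ∧ v = s2) ∨ (u = s1 ∧ v = t2) ∨
  (u = t1 ∧ v = t2) ∨ (u = t1 ∧ v = s1) ∨ (u = t2 ∧ v = s2) ∨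
  (u = s1 ∧ ∃ i : Fin 3, v = x i) ∨ ((∃ i : Fin 3, u = z i) ∧ v = t1) ∨
  (u = t1 ∧ ∃ i : Fin 3, v = y i) ∨ ((∃ i : Fin 3, u = y i) ∧ v = s1) ∨
  (∃ i : Fin 3, u = x i ∧ v = y i) ∨ (∃ i : Fin 3, u = y i ∧ v = z i) ∨
  (((∃ i : Fin 3, u = x i) ∨ (∃ i : Fin 3, u = y i)) ∧ v = s2) ∨
  (u = s2 ∧ ∃ i : Fin 3, v = z i) ∨
  (u = t2 ∧ ((∃ i : Fin 3, v = y i) ∨ (∃ i : Fin 3, v = z i))) ∨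
  ((∃ i : Fin 3, u = x i) ∧ v = t2) ∨
  (∃ i : Fin 3, u = z i ∧ v = y (i + 1)) ∨
  (∃ i : Fin 3, u = y (i + 1) ∧ v = x (i + 2))

variable {s1 t1 s2 t2 : V} {x y z : Fin 3 → V}
  (hnodup : ([s1, t1, s2, t2, x 0, x 1, x 2, y 0, y 1, y 2, z 0, z 1, z 2] : List V).Nodup)
include hnodup

theorem exampleArc_s1_out {v : V} (h : ExampleArc s1 t1 s2 t2 x y z s1 v) :
    v = s2 ∨ v = t2 ∨ ∃ j, v = x j := by
  simp only [List.nodup_cons, List.mem_cons, List.not_mem_nil, or_false, not_or] at hnodup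
  simp only [ExampleArc, Fin.exists_fin_succ, IsEmpty.exists_iff, or_false] at h
  grind

theorem exampleArc_x_out {v : V} (j : Fin 3) (h : ExampleArc s1 t1 s2 t2 x y z (x j) v) :
    v = y j ∨ v = s2 ∨ v = t2 := by
  simp only [List.nodup_cons, List.mem_cons, List.not_mem_nil, or_false, not_or] at hnodup
  simp only [ExampleArc, Fin.exists_fin_succ, IsEmpty.exists_iff, or_false] at h
  fin_cases j <;> grind

theorem exampleArc_y_out {v : V} (j : Fin 3) (h : ExampleArc s1 t1 s2 t2 x y z (y j) v) :
    v = y (j + 1) ∨ v = s1 ∨ v = z j ∨ v = s2 ∨ v = x (j + 1) := by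
  simp only [List.nodup_cons, List.mem_cons, List.not_mem_nil, or_false, not_or] at hnodup
  simp only [ExampleArc, Fin.exists_fin_succ, IsEmpty.exists_iff, or_false] at h
  fin_cases j <;> grind

theorem exampleArc_closed (i : Fin 3) {u v : V}
    (hu : u ∈ insert s1 (insert (y i) (Set.range x))) (huv : ExampleArc s1 t1 s2 t2 x y z u v)
    (hv : v ∉ ({s2, t2, z i, y (i + 1), y (i + 2)} : Set V)) :
    v ∈ insert s1 (insert (y i) (Set.range x)) := by
  simp only [Set.mem_insert_iff, Set.mem_singleton_iff, not_or, Set.mem_range] at hu hv ⊢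
  rcases hu with rfl | rfl | ⟨j, rfl⟩
  · grind [exampleArc_s1_out hnodup huv]
  · grind [exampleArc_y_out hnodup i huv]
  · have hj : j = i ∨ j = i + 1 ∨ j = i + 2 := by grind
    grind [exampleArc_x_out hnodup j huv]

theorem exampleArc_s1_t1_notMem (i : Fin 3) :
    s1 ∉ ({z i, y (i + 1), y (i + 2)} : Set V) ∧ t1 ∉ ({z i, y (i + 1), y (i + 2)} : Set V) ∧
      t1 ∉ insert s1 (insert (y i) (Set.range x)) := by
  simp only [List.nodup_cons, List.mem_cons, List.not_mem_nil, or_false, not_or] at hnodup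
  simp only [Set.mem_insert_iff, Set.mem_singleton_iff, Set.mem_range, Fin.exists_fin_succ, not_or]
  fin_cases i <;> grind

end ExampleDigraph

theorem stmt_7_general {V : Type*}
    (A : V → V → Prop) (s1 t1 s2 t2 : V) (x y z : Fin 3 → V)
    (hnodup : ([s1, t1, s2, t2, x 0, x 1, x 2, y 0, y 1, y 2,
                z 0, z 1, z 2] : List V).Nodup)
    (harc : ∀ u v : V, A u v ↔ (
      (∃ i : Fin 3, u = y i ∧ v = y (i + 1)) ∨
      (u = s1 ∧ v = s2) ∨ (u = t1 ∧ v = s2) ∨ (u = s1 ∧ v = t2) ∨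
      (u = t1 ∧ v = t2) ∨ (u = t1 ∧ v = s1) ∨ (u = t2 ∧ v = s2) ∨
      (u = s1 ∧ ∃ i : Fin 3, v = x i) ∨ ((∃ i : Fin 3, u = z i) ∧ v = t1) ∨
      (u = t1 ∧ ∃ i : Fin 3, v = y i) ∨ ((∃ i : Fin 3, u = y i) ∧ v = s1) ∨
      (∃ i : Fin 3, u = x i ∧ v = y i) ∨ (∃ i : Fin 3, u = y i ∧ v = z i) ∨
      (((∃ i : Fin 3, u = x i) ∨ (∃ i : Fin 3, u = y i)) ∧ v = s2) ∨
      (u = s2 ∧ ∃ i : Fin 3, v = z i) ∨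
      (u = t2 ∧ ((∃ i : Fin 3, v = y i) ∨ (∃ i : Fin 3, v = z i))) ∨
      ((∃ i : Fin 3, u = x i) ∧ v = t2) ∨
      (∃ i : Fin 3, u = z i ∧ v = y (i + 1)) ∨
      (∃ i : Fin 3, u = y (i + 1) ∧ v = x (i + 2)))) :
    ∀ i : Fin 3,
      s1 ∉ ({z i, y (i + 1), y (i + 2)} : Set V) ∧
      t1 ∉ ({z i, y (i + 1), y (i + 2)} : Set V) ∧
      ¬ ∃ l : List V, IsDipathFrom A s1 t1 l ∧
          ∀ v ∈ l, v ∉ ({s2, t2, z i, y (i + 1), y (i + 2)} : Set V) := by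
  obtain rfl : A = ExampleArc s1 t1 s2 t2 x y z := funext₂ fun u v => propext (harc u v)
  intro i
  obtain ⟨hs1, ht1, ht1R⟩ := exampleArc_s1_t1_notMem hnodup i
  refine ⟨hs1, ht1, fun ⟨l, hl, hlS⟩ => ht1R ?_⟩
  exact hl.mem_of_forall_arc hlS (Set.mem_insert s1 _) fun _ _ => exampleArc_closed hnodup i

/-- In the explicit 13-vertex split digraph of Proposition 2 (vertices
s1,t1,s2,t2 together with x 0,x 1,x 2, y 0,y 1,y 2, z 0,z 1,z 2, arcs exactly
as listed), for each i the set {z i, y (i+1), y (i+2)} (indices mod 3) is an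
(s1,t1)-separator in D − {s2,t2}. -/
theorem stmt_7 {V : Type*} [Fintype V] [DecidableEq V]
    (A : V → V → Prop) (s1 t1 s2 t2 : V) (x y z : Fin 3 → V)
    (hnodup : ([s1, t1, s2, t2, x 0, x 1, x 2, y 0, y 1, y 2,
                z 0, z 1, z 2] : List V).Nodup)
    (hvert : ∀ v : V, v ∈ ([s1, t1, s2, t2, x 0, x 1, x 2, y 0, y 1, y 2,
                z 0, z 1, z 2] : List V))
    (harc : ∀ u v : V, A u v ↔ (
      (∃ i : Fin 3, u = y i ∧ v = y (i + 1)) ∨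
      (u = s1 ∧ v = s2) ∨ (u = t1 ∧ v = s2) ∨ (u = s1 ∧ v = t2) ∨
      (u = t1 ∧ v = t2) ∨ (u = t1 ∧ v = s1) ∨ (u = t2 ∧ v = s2) ∨
      (u = s1 ∧ ∃ i : Fin 3, v = x i) ∨ ((∃ i : Fin 3, u = z i) ∧ v = t1) ∨
      (u = t1 ∧ ∃ i : Fin 3, v = y i) ∨ ((∃ i : Fin 3, u = y i) ∧ v = s1) ∨
      (∃ i : Fin 3, u = x i ∧ v = y i) ∨ (∃ i : Fin 3, u = y i ∧ v = z i) ∨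
      (((∃ i : Fin 3, u = x i) ∨ (∃ i : Fin 3, u = y i)) ∧ v = s2) ∨
      (u = s2 ∧ ∃ i : Fin 3, v = z i) ∨
      (u = t2 ∧ ((∃ i : Fin 3, v = y i) ∨ (∃ i : Fin 3, v = z i))) ∨
      ((∃ i : Fin 3, u = x i) ∧ v = t2) ∨
      (∃ i : Fin 3, u = z i ∧ v = y (i + 1)) ∨
      (∃ i : Fin 3, u = y (i + 1) ∧ v = x (i + 2)))) :
    ∀ i : Fin 3,
      s1 ∉ ({z i, y (i + 1), y (i + 2)} : Set V) ∧
      t1 ∉ ({z i, y (i + 1), y (i + 2)} : Set V) ∧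
      ¬ ∃ l : List V, IsDipathFrom A s1 t1 l ∧
          ∀ v ∈ l, v ∉ ({s2, t2, z i, y (i + 1), y (i + 2)} : Set V) :=
  stmt_7_general A s1 t1 s2 t2 x y z hnodup harc
end

section
/- Let D be a digraph, let k≥1, and let s_1,s_2,t_1,t_2 be distinct vertices of D. If D−{s_1,t_1} contains k internally disjoint (s_2,t_2)-paths and D−{s_2,t_2} contains an (s_1,t_1)-path with at most k−1 internal vertices, then the tuple (D,s_1,t_1,s_2,t_2) is good. -/
/-- If D − {s1,t1} contains k internally disjoint (s2,t2)-paths and D − {s2,t2}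
contains an (s1,t1)-path with at most k−1 internal vertices (i.e. with at most
k+1 vertices in total), then (D,s1,t1,s2,t2) is good. -/
theorem stmt_8 {V : Type*} [Fintype V] [DecidableEq V]
    (A : V → V → Prop) (hloop : IsLoopless A)
    (k : ℕ) (hk : 1 ≤ k)
    (s1 s2 t1 t2 : V) (hdist : ([s1, s2, t1, t2] : List V).Nodup)
    (h2 : HasIDPaths A {s1, t1} s2 t2 k)
    (h1 : ∃ l : List V, IsDipathFrom A s1 t1 l ∧
            (∀ v ∈ l, v ∉ ({s2, t2} : Set V)) ∧ l.length ≤ k + 1) :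
    IsGood A s1 t1 s2 t2 := by
  obtain ⟨P, hP, hPdisj⟩ := h2
  obtain ⟨l, hl, hlavoid, hllen⟩ := h1
  by_cases H : ∃ i, ∀ v ∈ l, v ∉ P i
  · obtain ⟨i, hi⟩ := H
    exact ⟨l, P i, hl, (hP i).1, hi⟩
  · push_neg at H
    choose f hf1 hf2 using H
    exfalso
    have hs1 : s1 ∈ l := List.mem_of_mem_head? (by rw [hl.2.1]; exact rfl)
    have ht1 : t1 ∈ l := List.mem_of_mem_getLast? (by rw [hl.2.2]; exact rfl)
    have hst : s1 ≠ t1 := by simp at hdist; tauto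
    have hinj : Function.Injective f := by
      intro i j hij
      by_contra hne
      rcases hPdisj i j hne (f i) (hf2 i) (hij ▸ hf2 j) with h | h <;>
        exact hlavoid (f i) (hf1 i) (by simp [h])
    have hmem : ∀ i, f i ∈ l.toFinset \ {s1, t1} := by
      intro i
      simp only [Finset.mem_sdiff, List.mem_toFinset, Finset.mem_insert,
        Finset.mem_singleton]
      refine ⟨hf1 i, ?_⟩
      rintro (h | h) <;>
        exact (hP i).2 (f i) (hf2 i) (by simp [h])
    have hcard := Finset.card_le_card_of_injOn (s := Finset.univ) f (fun i _ => hmem i)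
      (fun a _ b _ h => hinj h)
    have hsub : ({s1, t1} : Finset V) ⊆ l.toFinset := by
      intro v hv
      simp only [Finset.mem_insert, Finset.mem_singleton] at hv
      rcases hv with h | h <;> simp [h, hs1, ht1]
    have hcard2 : ({s1, t1} : Finset V).card = 2 := by
      rw [Finset.card_insert_of_notMem (by simpa using hst)]
      simp
    have hlt : l.toFinset.card ≤ k + 1 := by
      rw [List.toFinset_card_of_nodup hl.1.2.1]
      exact hllen
    rw [Finset.card_sdiff_of_subset hsub, hcard2] at hcard
    simp only [Finset.card_univ, Fintype.card_fin] at hcard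
    omega
end

section
/- Let D be a 6-strong digraph and let s_1,s_2,t_1,t_2 be distinct vertices of D. If D−{s_2,t_2} contains an (s_1,t_1)-path of length at most 4, then the tuple (D,s_1,t_1,s_2,t_2) is good. -/
/-- If D is 6-strong and D − {s2,t2} contains an (s1,t1)-path of length at most
4 (i.e. with at most 5 vertices), then (D,s1,t1,s2,t2) is good. -/
theorem stmt_9 {V : Type*} [Fintype V] [DecidableEq V]
    (A : V → V → Prop) (hloop : IsLoopless A)
    (hstrong : IsKStrong A 6)
    (s1 s2 t1 t2 : V) (hdist : ([s1, s2, t1, t2] : List V).Nodup)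
    (h : ∃ l : List V, IsDipathFrom A s1 t1 l ∧
           (∀ v ∈ l, v ∉ ({s2, t2} : Set V)) ∧ l.length ≤ 5) :
    IsGood A s1 t1 s2 t2 := by
  obtain ⟨l, hl, havoid, hlen⟩ := h
  have hs2t2 : s2 ≠ t2 := by simp at hdist; tauto
  have hcard : l.toFinset.card ≤ 6 - 1 := by
    calc l.toFinset.card ≤ l.length := List.toFinset_card_le l
    _ ≤ 5 := hlen
  obtain ⟨P2, hP2, hP2F⟩ := hstrong.2 l.toFinset hcard s2 t2
    (by simp only [List.mem_toFinset]; intro hm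
        exact havoid s2 hm (by simp))
    (by simp only [List.mem_toFinset]; intro hm
        exact havoid t2 hm (by simp))
    hs2t2
  exact ⟨l, P2, hl, hP2, fun v hv hv2 => hP2F v hv2 (List.mem_toFinset.mpr hv)⟩
end

section
/- Let D=(V_1,V_2;A) be a semicomplete split digraph and let s_1,s_2,t_1,t_2 be distinct vertices of D. Let P_1,P_2,P_3 be three internally disjoint minimal (s_1,t_1)-paths in D−{s_2,t_2} and let Q_1,Q_2,Q_3 be three internally disjoint minimal (s_2,t_2)-paths in D−{s_1,t_1}. Assume the tuple (D,s_1,t_1,s_2,t_2) is not good, and let S=(V(P_1)∪V(P_2)∪V(P_3))∖{s_1,t_1}. For each i∈{1,2,3}, the path Q_i intersects S; let z_i be the first and w_i the last vertex of Q_i lying in S (in the order along Q_i). Assume additionally that for every i∈{1,2,3}, exactly one of z_1,z_2,z_3 lies on P_i and exactly one of w_1,w_2,w_3 lies on P_i. Then for each i∈{1,2,3}, the path P_i has exactly 5 vertices; writing P_i as s_1→a_i→y_i→b_i→t_1, the vertices a_i and b_i belong to V_1 and the vertex y_i belongs to V_2. -/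
/-- An (s,t)-path `l` is minimal if no (s,t)-path using only vertices of `l`
is shorter than `l`. -/
def IsMinimalDipathFrom {V : Type*} (A : V → V → Prop) (s t : V) (l : List V) : Prop :=
  IsDipathFrom A s t l ∧
    ∀ l2 : List V, IsDipathFrom A s t l2 → (∀ v ∈ l2, v ∈ l) → l.length ≤ l2.length

/-- `a` is the first vertex of the path `l` (in the order along `l`) lying in `S`. -/
def IsFirstIn {V : Type*} (S : Set V) (l : List V) (a : V) : Prop :=
  ∃ p q : List V, l = p ++ a :: q ∧ a ∈ S ∧ ∀ v ∈ p, v ∉ S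

/-- `a` is the last vertex of the path `l` (in the order along `l`) lying in `S`. -/
def IsLastIn {V : Type*} (S : Set V) (l : List V) (a : V) : Prop :=
  ∃ p q : List V, l = p ++ a :: q ∧ a ∈ S ∧ ∀ v ∈ q, v ∉ S

open Relation

section

variable {V : Type*} {A : V → V → Prop}

theorem exists_isDipathFrom_of_reflTransGen {U : Set V} {s t : V} (hs : s ∈ U)
    (h : ReflTransGen (fun a b => A a b ∧ b ∈ U) s t) :
    ∃ l, IsDipathFrom A s t l ∧ ∀ v ∈ l, v ∈ U := by
  induction h with
  | refl =>
    exact ⟨[s], ⟨⟨List.cons_ne_nil _ _, List.nodup_singleton s, .singleton s⟩, rfl, rfl⟩, by simpa⟩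
  | @tail b c _ hbc ih =>
    obtain ⟨l, ⟨⟨hne, hnd, hch⟩, hhead, hlast⟩, hU⟩ := ih
    by_cases hc : c ∈ l
    · obtain ⟨p, q, rfl⟩ := List.append_of_mem hc
      have hpre : p ++ [c] <+: p ++ c :: q := by simp
      refine ⟨p ++ [c], ⟨⟨by simp, hpre.sublist.nodup hnd, List.IsChain.prefix hch hpre⟩,
        by simpa [List.head?_append] using hhead, by simp⟩,
        fun v hv => hU v (hpre.subset hv)⟩
    · refine ⟨l ++ [c], ⟨⟨by simp, ?_, ?_⟩, by simp [List.head?_append, hhead], by simp⟩, ?_⟩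
      · simpa [List.nodup_append, hnd] using fun a ha (hac : a = c) => hc (hac ▸ ha)
      · exact List.IsChain.append hch (by simp) (by simp_all)
      · simpa [or_imp, forall_and] using ⟨hU, hbc.2⟩

theorem reflTransGen_of_isChain {U : Set V} {l : List V} {a b : V} (hl : l.IsChain A)
    (hU : ∀ v ∈ l, v ∈ U) (ha : l.head? = some a) (hb : l.getLast? = some b) :
    ReflTransGen (fun x y => A x y ∧ y ∈ U) a b := by
  have hne : l ≠ [] := by rintro rfl; simp at ha
  rw [List.head?_eq_some_head hne, Option.some_inj] at ha
  rw [List.getLast?_eq_some_getLast hne, Option.some_inj] at hb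
  exact ha ▸ hb ▸ List.relationReflTransGen_of_exists_isChain l
    (hl.imp_of_mem_imp fun _ y _ hy hxy => ⟨hxy, hU y hy⟩) hne

theorem isGood_of_reflTransGen {s1 t1 s2 t2 : V} {P : List V} (hP : IsDipathFrom A s1 t1 P)
    (hs2 : s2 ∉ P) (h : ReflTransGen (fun x y => A x y ∧ y ∈ {v | v ∉ P}) s2 t2) :
    IsGood A s1 t1 s2 t2 := by
  obtain ⟨Q, hQ, hQP⟩ := exists_isDipathFrom_of_reflTransGen (U := {v | v ∉ P}) hs2 h
  exact ⟨P, Q, hP, hQ, fun v hvP hvQ => hQP v hvQ hvP⟩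

theorem IsFirstIn.reflTransGen {S U : Set V} {Q : List V} {s t z : V} (hz : IsFirstIn S Q z)
    (hQ : IsDipathFrom A s t Q) (hU : ∀ v ∈ Q, v ∉ S → v ∈ U) (hzU : z ∈ U) :
    ReflTransGen (fun x y => A x y ∧ y ∈ U) s z := by
  obtain ⟨p, q, rfl, -, hp⟩ := hz
  refine reflTransGen_of_isChain (l := p ++ [z]) (List.IsChain.prefix hQ.1.2.2 (by simp)) ?_
    (by simpa [List.head?_append] using hQ.2.1) (by simp)
  simp only [List.mem_append, List.mem_singleton]
  rintro v (hv | rfl)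
  · exact hU v (by simp [hv]) (hp v hv)
  · exact hzU

theorem IsLastIn.reflTransGen {S U : Set V} {Q : List V} {s t w : V} (hw : IsLastIn S Q w)
    (hQ : IsDipathFrom A s t Q) (hU : ∀ v ∈ Q, v ∉ S → v ∈ U) (hwU : w ∈ U) :
    ReflTransGen (fun x y => A x y ∧ y ∈ U) w t := by
  obtain ⟨p, q, rfl, -, hq⟩ := hw
  refine reflTransGen_of_isChain (l := w :: q) (List.IsChain.suffix hQ.1.2.2 (by simp)) ?_
    rfl (by simpa [List.getLast?_append] using hQ.2.2)
  simp only [List.mem_cons]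
  rintro v (rfl | hv)
  · exact hwU
  · exact hU v (by simp [hv]) (hq v hv)

namespace IsDipathFrom

variable {s t : V} {l : List V}

theorem getD_zero (h : IsDipathFrom A s t l) : l.getD 0 s = s := by
  simp [List.getD_eq_getElem?_getD, ← List.head?_eq_getElem?, h.2.1]

theorem getD_length_sub_one (h : IsDipathFrom A s t l) : l.getD (l.length - 1) s = t := by
  simp [List.getD_eq_getElem?_getD, ← List.getLast?_eq_getElem?, h.2.2]

theorem exists_getD_eq (h : IsDipathFrom A s t l) {v : V} (hv : v ∈ l) (hs : v ≠ s)
    (ht : v ≠ t) : ∃ m, 1 ≤ m ∧ m + 2 ≤ l.length ∧ l.getD m s = v := by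
  obtain ⟨m, hm, rfl⟩ := List.mem_iff_getElem.mp hv
  rw [← List.getD_eq_getElem _ s hm] at hs ht ⊢
  refine ⟨m, Nat.one_le_iff_ne_zero.mpr ?_, ?_, rfl⟩
  · rintro rfl
    exact hs h.getD_zero
  · by_contra! hlast
    obtain rfl : m = l.length - 1 := by omega
    exact ht h.getD_length_sub_one

theorem injOn_getD (h : IsDipathFrom A s t l) : Set.InjOn (l.getD · s) (Set.Iio l.length) := by
  intro a ha b hb hab
  simp only [List.getD_eq_getElem _ _ (Set.mem_Iio.mp ha),
    List.getD_eq_getElem _ _ (Set.mem_Iio.mp hb)] at hab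
  exact h.1.2.1.getElem_inj_iff.mp hab

theorem getD_mem_ne_ends (h : IsDipathFrom A s t l) {m : ℕ} (hm1 : 1 ≤ m) (hm2 : m + 2 ≤ l.length) :
    l.getD m s ∈ l ∧ l.getD m s ≠ s ∧ l.getD m s ≠ t := by
  have hm : m ∈ Set.Iio l.length := Set.mem_Iio.mpr (by omega)
  refine ⟨?_, fun hs => ?_, fun ht => ?_⟩
  · rw [List.getD_eq_getElem _ _ hm]
    exact List.getElem_mem _
  · have := h.injOn_getD hm (Set.mem_Iio.mpr (by omega)) (hs.trans h.getD_zero.symm)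
    omega
  · have := h.injOn_getD hm (Set.mem_Iio.mpr (by omega)) (ht.trans h.getD_length_sub_one.symm)
    omega

theorem eq_of_length_eq_five (h : IsDipathFrom A s t l) (h5 : l.length = 5) :
    l = [s, l.getD 1 s, l.getD 2 s, l.getD 3 s, t] := by
  match l, h5, h with
  | [_, _, _, _, _], _, ⟨_, hs, ht⟩ => simp_all

end IsDipathFrom

theorem le_length_sub_two_of_not_isGood {s1 t1 s2 t2 : V} {k : ℕ} {P : List V}
    (hbad : ¬ IsGood A s1 t1 s2 t2) (hP : IsDipathFrom A s1 t1 P)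
    (hPst : ∀ v ∈ P, v ∉ ({s2, t2} : Set V)) (hQ : HasIDPaths A {s1, t1} s2 t2 k) :
    k ≤ P.length - 2 := by
  obtain ⟨Q, hQ, hQdisj⟩ := hQ
  have hmeet (c : Fin k) : ∃ v ∈ Q c, v ∈ P ∧ v ≠ s1 ∧ v ≠ t1 := by
    by_contra! hno
    refine hbad ⟨P, Q c, hP, (hQ c).1, fun v hvP hvQ => (hQ c).2 v hvQ ?_⟩
    by_cases hv : v = s1
    · simp [hv]
    · simp [hno v hvQ hvP hv]
  choose x hxQ hxP hxs hxt using hmeet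
  choose m hm1 hm2 hmx using fun c => hP.exists_getD_eq (hxP c) (hxs c) (hxt c)
  have hinj : Set.InjOn m (Finset.univ : Finset (Fin k)) := by
    intro c _ c' _ hcc'
    by_contra hne
    have hx : x c = x c' := by rw [← hmx, ← hmx, hcc']
    exact hPst _ (hxP c) ((hQdisj c c' hne _ (hxQ c) (hx ▸ hxQ c')).imp id id)
  calc k = (Finset.univ : Finset (Fin k)).card := by simp
    _ ≤ (Finset.Icc 1 (P.length - 2)).card :=
      Finset.card_le_card_of_injOn m
        (fun c _ => Finset.mem_Icc.mpr ⟨hm1 c, Nat.le_sub_of_add_le (hm2 c)⟩) hinj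
    _ = P.length - 2 := by simp

structure IsShortcutFreePath (A : V → V → Prop) (f : ℕ → V) (K : ℕ) : Prop where
  arc : ∀ m, m + 1 < K → A (f m) (f (m + 1))
  injOn : Set.InjOn f (Set.Iio K)
  not_arc : ∀ a b, a + 2 ≤ b → b < K → ¬ A (f a) (f b)

theorem IsMinimalDipathFrom.not_arc_getD {s t : V} {l : List V}
    (h : IsMinimalDipathFrom A s t l) {a b : ℕ} (hab : a + 2 ≤ b) (hb : b < l.length) :
    ¬ A (l.getD a s) (l.getD b s) := by
  intro harc
  obtain ⟨⟨⟨-, hnd, hch⟩, hs, ht⟩, hmin⟩ := h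
  have hsub : (l.take (a + 1) ++ l.drop b).Sublist l := by
    conv_rhs => rw [← List.take_append_drop (a + 1) l]
    exact (List.drop_sublist_drop_left l (by omega)).append_left _
  have hlen : (l.take (a + 1) ++ l.drop b).length = a + 1 + (l.length - b) := by
    simp only [List.length_append, List.length_take, List.length_drop]
    omega
  have hshort := hmin (l.take (a + 1) ++ l.drop b)
    ⟨⟨List.ne_nil_of_length_pos (by omega), hsub.nodup hnd, ?_⟩, ?_, ?_⟩ hsub.subset
  · omega
  · refine (List.IsChain.take hch _).append (List.IsChain.drop hch _) ?_
    rw [List.getD_eq_getElem _ _ (by omega), List.getD_eq_getElem _ _ hb] at harc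
    simp [List.getLast?_take, List.getElem?_eq_getElem (show a < l.length by omega),
      List.getElem?_eq_getElem hb, harc]
  · simp [List.head?_append, List.head?_take, hs]
  · rw [List.getLast?_append, List.getLast?_drop, if_neg (by omega), ht, Option.some_or]

theorem IsMinimalDipathFrom.isShortcutFreePath {s t : V} {l : List V}
    (h : IsMinimalDipathFrom A s t l) :
    IsShortcutFreePath A (fun m => l.getD m s) l.length where
  arc m hm := by
    rw [List.getD_eq_getElem _ _ hm, List.getD_eq_getElem _ _ (Nat.lt_of_succ_lt hm)]
    exact List.isChain_iff_getElem.mp h.1.1.2.2 m hm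
  injOn := h.1.injOn_getD
  not_arc _ _ := h.not_arc_getD

def InteriorArc (A : V → V → Prop) (f : ℕ → V) (K x y : ℕ) : Prop :=
  A (f x) (f y) ∧ 1 ≤ x ∧ x + 2 ≤ K ∧ 1 ≤ y ∧ y + 2 ≤ K

theorem isGood_of_reflTransGen_interiorArc {s1 t1 s2 t2 : V} {S : Set V}
    {P P' Qc Qd : List V} {vz uw : ℕ} (hP : IsDipathFrom A s1 t1 P)
    (hP' : IsDipathFrom A s1 t1 P') (hs2 : s2 ∉ P') (hPP' : ∀ v ∈ P, v ∈ P' → v = s1 ∨ v = t1)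
    (hQc : IsDipathFrom A s2 t2 Qc) (hQd : IsDipathFrom A s2 t2 Qd)
    (hQcS : ∀ v ∈ Qc, v ∉ S → v ∉ P') (hQdS : ∀ v ∈ Qd, v ∉ S → v ∉ P')
    (hz : IsFirstIn S Qc (P.getD vz s1)) (hw : IsLastIn S Qd (P.getD uw s1))
    (hvz : 1 ≤ vz) (hvzP : vz + 2 ≤ P.length) (huw : 1 ≤ uw) (huwP : uw + 2 ≤ P.length)
    (h : ReflTransGen (InteriorArc A (fun m => P.getD m s1) P.length) vz uw) :
    IsGood A s1 t1 s2 t2 := by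
  have hint {m : ℕ} (hm1 : 1 ≤ m) (hm2 : m + 2 ≤ P.length) : P.getD m s1 ∉ P' := by
    obtain ⟨hmem, hs, ht⟩ := hP.getD_mem_ne_ends hm1 hm2
    exact fun hj => (hPP' _ hmem hj).elim hs ht
  have hzw : ReflTransGen (fun x y => A x y ∧ y ∈ {v | v ∉ P'}) (P.getD vz s1) (P.getD uw s1) :=
    h.lift (P.getD · s1) fun _ y hxy => ⟨hxy.1, hint hxy.2.2.2.1 hxy.2.2.2.2⟩
  exact isGood_of_reflTransGen hP' hs2 <| (hz.reflTransGen hQc hQcS (hint hvz hvzP)).trans <|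
    hzw.trans <| hw.reflTransGen hQd hQdS (hint huw huwP)

namespace IsShortcutFreePath

variable {f : ℕ → V} {K : ℕ} {V1 : Set V}

theorem reflTransGen_interiorArc (h : IsShortcutFreePath A f K) {a b : ℕ} (ha : 1 ≤ a)
    (hab : a ≤ b) (hb : b + 2 ≤ K) : ReflTransGen (InteriorArc A f K) a b := by
  induction b, hab using Nat.le_induction with
  | base => exact .refl
  | succ b hab ih =>
    exact (ih (by omega)).tail ⟨h.arc b (by omega), by omega, by omega, by omega, hb⟩

theorem arc_of_not_mem (h : IsShortcutFreePath A f K)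
    (hsemi : ∀ u v, u ≠ v → u ∉ V1 ∨ v ∉ V1 → A u v ∨ A v u) {x y : ℕ} (hyx : y + 2 ≤ x)
    (hx : x < K) (hV : f x ∉ V1 ∨ f y ∉ V1) : A (f x) (f y) := by
  have hne : f x ≠ f y := fun heq => by
    have := h.injOn (Set.mem_Iio.mpr hx) (Set.mem_Iio.mpr (by omega)) heq
    omega
  exact (hsemi _ _ hne hV).resolve_right (h.not_arc y x hyx hx)

variable {z w : ℕ}

theorem mem_and_mem_of_not_reflTransGen (h : IsShortcutFreePath A f K)
    (hsemi : ∀ u v, u ≠ v → u ∉ V1 ∨ v ∉ V1 → A u v ∨ A v u)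
    (hnot : ¬ ReflTransGen (InteriorArc A f K) z w) (hz : 1 ≤ z) (hw : w + 2 ≤ K)
    {x y : ℕ} (hzx : z ≤ x) (hx : x + 2 ≤ K) (hy : 1 ≤ y) (hyw : y ≤ w) (hyx : y + 2 ≤ x) :
    f x ∈ V1 ∧ f y ∈ V1 := by
  by_contra hV
  have harc := h.arc_of_not_mem hsemi hyx (by omega) (by tauto)
  exact hnot <| (h.reflTransGen_interiorArc hz hzx hx).trans <|
    .head ⟨harc, by omega, hx, hy, by omega⟩ (h.reflTransGen_interiorArc hy hyw hw)

theorem reflTransGen_one_of_not_mem (h : IsShortcutFreePath A f K)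
    (hsemi : ∀ u v, u ≠ v → u ∉ V1 ∨ v ∉ V1 → A u v ∨ A v u) (hzK : z + 2 = K) (hz : 4 ≤ z)
    (h2 : f 2 ∉ V1) (hz1 : f (z - 1) ∉ V1) : ReflTransGen (InteriorArc A f K) z 1 := by
  have hz2 := h.arc_of_not_mem hsemi (x := z) (y := 2) (by omega) (by omega) (.inr h2)
  have hz1 := h.arc_of_not_mem hsemi (x := z - 1) (y := 1) (by omega) (by omega) (.inl hz1)
  exact .head ⟨hz2, by omega, by omega, by omega, by omega⟩ <|
    (h.reflTransGen_interiorArc (b := z - 1) (by omega) (by omega) (by omega)).tail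
      ⟨hz1, by omega, by omega, le_rfl, by omega⟩

theorem lt_of_not_reflTransGen (h : IsShortcutFreePath A f K) (hz : 1 ≤ z) (hwK : w + 2 ≤ K)
    (hnot : ¬ ReflTransGen (InteriorArc A f K) z w) : w < z := by
  by_contra! hzw
  exact hnot (h.reflTransGen_interiorArc hz hzw hwK)

theorem eq_five_of_mem_of_mem (h : IsShortcutFreePath A f K)
    (hV1 : ∀ u ∈ V1, ∀ v ∈ V1, ¬ A u v)
    (hsemi : ∀ u v, u ≠ v → u ∉ V1 ∨ v ∉ V1 → A u v ∨ A v u)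
    (hz : 1 ≤ z) (hzK : z + 2 ≤ K) (hw : 1 ≤ w) (hwK : w + 2 ≤ K)
    (hnot : ¬ ReflTransGen (InteriorArc A f K) z w) (hzV : f z ∈ V1) (hwV : f w ∈ V1) :
    K = 5 ∧ f 1 ∈ V1 ∧ f 2 ∉ V1 ∧ f 3 ∈ V1 := by
  have hwz := h.lt_of_not_reflTransGen hz hwK hnot
  have far {x y : ℕ} := h.mem_and_mem_of_not_reflTransGen hsemi hnot hz hwK (x := x) (y := y)
  have indep (a b : ℕ) (hb : b = a + 1) (hbK : b < K) (ha : f a ∈ V1) : f b ∉ V1 :=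
    fun hbV => hV1 _ ha _ hbV (hb ▸ h.arc a (hb ▸ hbK))
  have hgap : w + 2 ≤ z := by
    by_contra
    exact indep w z (by omega) (by omega) hwV hzV
  obtain rfl : w = 1 := by
    by_contra
    exact indep 1 2 rfl (by omega) (far le_rfl hzK le_rfl (by omega) (by omega)).2
      (far le_rfl hzK (by omega) (by omega) (by omega)).2
  obtain rfl : K = z + 2 := by
    by_contra
    exact indep (K - 3) (K - 2) (by omega) (by omega)
      (far (x := K - 3) (by omega) (by omega) le_rfl le_rfl (by omega)).1
      (far (x := K - 2) (by omega) (by omega) le_rfl le_rfl (by omega)).1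
  have h2V : f 2 ∉ V1 := indep 1 2 rfl (by omega) hwV
  obtain rfl : z = 3 := by
    by_contra
    exact hnot <| h.reflTransGen_one_of_not_mem hsemi rfl (by omega) h2V
      fun hV => indep (z - 1) z (by omega) (by omega) hV hzV
  exact ⟨rfl, hwV, h2V, hzV⟩

theorem eq_five_of_not_reflTransGen (h : IsShortcutFreePath A f K)
    (hV1 : ∀ u ∈ V1, ∀ v ∈ V1, ¬ A u v)
    (hsemi : ∀ u v, u ≠ v → u ∉ V1 ∨ v ∉ V1 → A u v ∨ A v u) (hK : 5 ≤ K)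
    (hz : 1 ≤ z) (hzK : z + 2 ≤ K) (hw : 1 ≤ w) (hwK : w + 2 ≤ K)
    (hnot : ¬ ReflTransGen (InteriorArc A f K) z w) :
    K = 5 ∧ f 1 ∈ V1 ∧ f 2 ∉ V1 ∧ f 3 ∈ V1 := by
  have hwz := h.lt_of_not_reflTransGen hz hwK hnot
  have far {x y : ℕ} := h.mem_and_mem_of_not_reflTransGen hsemi hnot hz hwK (x := x) (y := y)
  have indep (a b : ℕ) (hb : b = a + 1) (hbK : b < K) (ha : f a ∈ V1) : f b ∉ V1 :=
    fun hbV => hV1 _ ha _ hbV (hb ▸ h.arc a (hb ▸ hbK))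
  by_cases hzV : f z ∈ V1
  · by_cases hwV : f w ∈ V1
    · exact h.eq_five_of_mem_of_mem hV1 hsemi hz hzK hw hwK hnot hzV hwV
    have hK3 : w + 3 = K := by
      by_contra
      exact hwV (far (x := K - 2) (by omega) (by omega) hw le_rfl (by omega)).2
    obtain rfl : w = 2 := by
      by_contra
      exact indep (w - 2) (w - 1) (by omega) (by omega)
        (far (x := w + 1) (y := w - 2) (by omega) (by omega) (by omega) (by omega) (by omega)).2
        (far (x := w + 1) (y := w - 1) (by omega) (by omega) (by omega) (by omega) (by omega)).2
    obtain rfl : z = 3 := by omega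
    exact ⟨hK3.symm, (far (x := 3) (y := 1) le_rfl (by omega) le_rfl (by omega) le_rfl).2, hwV, hzV⟩
  · obtain rfl : z = 2 := by
      by_contra
      exact hzV (far (y := 1) le_rfl hzK le_rfl hw (by omega)).1
    obtain rfl : w = 1 := by omega
    have h31 := far (x := 3) (y := 1) (by omega) (by omega) le_rfl le_rfl le_rfl
    refine ⟨?_, h31.2, hzV, h31.1⟩
    by_contra
    exact indep 3 4 rfl (by omega) h31.1
      (far (x := 4) (y := 1) (by omega) (by omega) le_rfl le_rfl (by omega)).1

end IsShortcutFreePath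

namespace IsSplitDigraph

variable {V1 V2 : Set V}

theorem mem_right_of_not_mem_left (h : IsSplitDigraph A V1 V2) {v : V} (hv : v ∉ V1) :
    v ∈ V2 := by
  obtain ⟨-, -, -, hcover, -, -⟩ := h
  exact (hcover ▸ Set.mem_univ v : v ∈ V1 ∪ V2).resolve_left hv

theorem arc_or_arc (h : IsSplitDigraph A V1 V2) (hsemi : ∀ u ∈ V1, ∀ v ∈ V2, A u v ∨ A v u)
    {u v : V} (huv : u ≠ v) (hV : u ∉ V1 ∨ v ∉ V1) : A u v ∨ A v u := by
  by_cases hu : u ∈ V1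
  · exact hsemi u hu v (h.mem_right_of_not_mem_left (hV.resolve_left (not_not.mpr hu)))
  have hu2 := h.mem_right_of_not_mem_left hu
  by_cases hv : v ∈ V1
  · exact (hsemi v hv u hu2).symm
  · exact h.2.2.2.2.2 u hu2 v (h.mem_right_of_not_mem_left hv) huv

end IsSplitDigraph

end

theorem stmt_15_general {V : Type*}
    (A : V → V → Prop) (V1 V2 : Set V)
    (hsplit : IsSplitDigraph A V1 V2)
    (hsemi : ∀ u ∈ V1, ∀ v ∈ V2, A u v ∨ A v u)
    (s1 s2 t1 t2 : V)
    (P Q : Fin 3 → List V)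
    (hP : ∀ i, IsMinimalDipathFrom A s1 t1 (P i) ∧
            ∀ v ∈ P i, v ∉ ({s2, t2} : Set V))
    (hPdisj : ∀ i j, i ≠ j → ∀ v, v ∈ P i → v ∈ P j → v = s1 ∨ v = t1)
    (hQ : ∀ i, IsMinimalDipathFrom A s2 t2 (Q i) ∧
            ∀ v ∈ Q i, v ∉ ({s1, t1} : Set V))
    (hQdisj : ∀ i j, i ≠ j → ∀ v, v ∈ Q i → v ∈ Q j → v = s2 ∨ v = t2)
    (hbad : ¬ IsGood A s1 t1 s2 t2)
    (S : Set V)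
    (hS : S = {v | (v ∈ P 0 ∨ v ∈ P 1 ∨ v ∈ P 2) ∧ v ≠ s1 ∧ v ≠ t1})
    (z w : Fin 3 → V)
    (hz : ∀ i, IsFirstIn S (Q i) (z i))
    (hw : ∀ i, IsLastIn S (Q i) (w i))
    (hz1 : ∀ i : Fin 3, ∃! j : Fin 3, z j ∈ P i)
    (hw1 : ∀ i : Fin 3, ∃! j : Fin 3, w j ∈ P i) :
    ∀ i : Fin 3, (P i).length = 5 ∧
      ∃ a y b : V, P i = [s1, a, y, b, t1] ∧ a ∈ V1 ∧ b ∈ V1 ∧ y ∈ V2 := by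
  intro i
  obtain ⟨j, hji⟩ : ∃ j, j ≠ i := ⟨i + 1, by simp⟩
  have hPi := (hP i).1
  have hSst : ∀ v ∈ S, v ≠ s1 ∧ v ≠ t1 := hS ▸ fun v hv => hv.2
  have hQoff (k : Fin 3) : ∀ v ∈ Q k, v ∉ S → v ∉ P j := by
    subst hS
    intro v hv hvS hvj
    have hst := (hQ k).2 v hv
    fin_cases j <;> simp_all
  have hK : 3 ≤ (P i).length - 2 :=
    le_length_sub_two_of_not_isGood hbad hPi.1 (hP i).2 ⟨Q, fun k => ⟨(hQ k).1.1, (hQ k).2⟩, hQdisj⟩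
  obtain ⟨c, hc, -⟩ := hz1 i
  obtain ⟨d, hd, -⟩ := hw1 i
  obtain ⟨-, -, -, hzS, -⟩ := hz c
  obtain ⟨-, -, -, hwS, -⟩ := hw d
  obtain ⟨vz, hvz1, hvz2, hvz⟩ := hPi.1.exists_getD_eq hc (hSst _ hzS).1 (hSst _ hzS).2
  obtain ⟨uw, huw1, huw2, huw⟩ := hPi.1.exists_getD_eq hd (hSst _ hwS).1 (hSst _ hwS).2
  have hnot : ¬ ReflTransGen (InteriorArc A (fun m => (P i).getD m s1) (P i).length) vz uw :=
    fun hr => hbad <| isGood_of_reflTransGen_interiorArc hPi.1 (hP j).1.1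
      (fun h => (hP j).2 s2 h (by simp)) (hPdisj i j hji.symm) (hQ c).1.1 (hQ d).1.1
      (hQoff c) (hQoff d) (hvz ▸ hz c) (huw ▸ hw d) hvz1 hvz2 huw1 huw2 hr
  obtain ⟨h5, h1, h2, h3⟩ := hPi.isShortcutFreePath.eq_five_of_not_reflTransGen
    hsplit.2.2.2.2.1 (fun _ _ => hsplit.arc_or_arc hsemi) (by omega) hvz1 hvz2 huw1 huw2 hnot
  exact ⟨h5, _, _, _, hPi.1.eq_of_length_eq_five h5, h1, h3, hsplit.mem_right_of_not_mem_left h2⟩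

/-- Claim 10 of the paper: under the hypotheses of Case 3 (each P i carries
exactly one z j and exactly one w j), every P i has exactly five vertices,
P i = s1 → a → y → b → t1 with a, b ∈ V1 and y ∈ V2. -/
theorem stmt_15 {V : Type*} [Fintype V] [DecidableEq V]
    (A : V → V → Prop) (V1 V2 : Set V)
    (hloop : IsLoopless A) (hsplit : IsSplitDigraph A V1 V2)
    (hsemi : ∀ u ∈ V1, ∀ v ∈ V2, A u v ∨ A v u)
    (s1 s2 t1 t2 : V) (hdist : ([s1, s2, t1, t2] : List V).Nodup)
    (P Q : Fin 3 → List V)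
    (hP : ∀ i, IsMinimalDipathFrom A s1 t1 (P i) ∧
            ∀ v ∈ P i, v ∉ ({s2, t2} : Set V))
    (hPdisj : ∀ i j, i ≠ j → ∀ v, v ∈ P i → v ∈ P j → v = s1 ∨ v = t1)
    (hQ : ∀ i, IsMinimalDipathFrom A s2 t2 (Q i) ∧
            ∀ v ∈ Q i, v ∉ ({s1, t1} : Set V))
    (hQdisj : ∀ i j, i ≠ j → ∀ v, v ∈ Q i → v ∈ Q j → v = s2 ∨ v = t2)
    (hbad : ¬ IsGood A s1 t1 s2 t2)
    (S : Set V)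
    (hS : S = {v | (v ∈ P 0 ∨ v ∈ P 1 ∨ v ∈ P 2) ∧ v ≠ s1 ∧ v ≠ t1})
    (z w : Fin 3 → V)
    (hz : ∀ i, IsFirstIn S (Q i) (z i))
    (hw : ∀ i, IsLastIn S (Q i) (w i))
    (hz1 : ∀ i : Fin 3, ∃! j : Fin 3, z j ∈ P i)
    (hw1 : ∀ i : Fin 3, ∃! j : Fin 3, w j ∈ P i) :
    ∀ i : Fin 3, (P i).length = 5 ∧
      ∃ a y b : V, P i = [s1, a, y, b, t1] ∧ a ∈ V1 ∧ b ∈ V1 ∧ y ∈ V2 :=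
  stmt_15_general A V1 V2 hsplit hsemi s1 s2 t1 t2 P Q hP hPdisj hQ hQdisj hbad S hS z w hz hw hz1
    hw1
end
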